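/- If A is an n×n real matrix with A_{ii} ≥ 0 for all i, A_{ij} ≤ 0 for i ≠ j, and each row summing to zero (A e = 0), then A admits an LU factorization without pivoting; moreover one may take the factorization with U having unit diagonal entries. -/
import Mathlib

open Matrix Finset

private lemma lu_aux : ∀ (n : ℕ) (A : Matrix (Fin n) (Fin n) ℝ),
    (∀ i j, i ≠ j → A i j ≤ 0) → (∀ i, ∑ j, A i j = 0) →
    ∃ L U : Matrix (Fin n) (Fin n) ℝ,
      (∀ i j, i < j → L i j = 0) ∧
      (∀ i j, j < i → U i j = 0) ∧ (∀ i, U i i = 1) ∧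
      A = L * U := by
  intro n
  induction n with
  | zero =>
    intro A _ _
    exact ⟨0, 1, fun i => i.elim0, fun i => i.elim0, fun i => i.elim0,
      Matrix.ext fun i => i.elim0⟩
  | succ n ih =>
    intro A hoff hrow
    classical
    set a : ℝ := A 0 0 with ha_def
    set c : Fin n → ℝ := fun i => A i.succ 0 with hc_def
    set r : Fin n → ℝ := fun j => A 0 j.succ with hr_def
    set B : Fin n → Fin n → ℝ := fun i j => A i.succ j.succ with hB_def
    have hr_nonpos : ∀ j, r j ≤ 0 := fun j => hoff 0 j.succ (Fin.succ_ne_zero j).symm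
    have hc_nonpos : ∀ i, c i ≤ 0 := fun i => hoff i.succ 0 (Fin.succ_ne_zero i)
    have hr_sum : ∑ j, r j = -a := by
      have h := hrow 0
      rw [Fin.sum_univ_succ] at h
      simp only [hr_def, ha_def]
      linarith
    have ha_nonneg : 0 ≤ a := by
      have h : ∑ j, r j ≤ 0 := Finset.sum_nonpos (fun j _ => hr_nonpos j)
      linarith [hr_sum]
    have hB_sum : ∀ i, ∑ j, B i j = -c i := by
      intro i
      have h := hrow i.succ
      rw [Fin.sum_univ_succ] at h
      simp only [hB_def, hc_def]
      linarith
    set u : Fin n → ℝ := fun j => if a = 0 then (if j.val = 0 then -1 else 0) else r j / a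
      with hu_def
    have ha_mul_u : ∀ j, a * u j = r j := by
      intro j
      by_cases ha : a = 0
      · have hz : ∑ j, r j = 0 := by rw [hr_sum, ha, neg_zero]
        have hr0 : r j = 0 :=
          (Finset.sum_eq_zero_iff_of_nonpos (fun j _ => hr_nonpos j)).mp hz j (mem_univ j)
        simp [hu_def, ha, hr0]
      · simp only [hu_def, ha, if_false]
        rw [mul_comm, div_mul_cancel₀ _ ha]
    have hu_nonpos : ∀ j, u j ≤ 0 := by
      intro j
      by_cases ha : a = 0
      · simp only [hu_def, ha, if_true]
        split <;> norm_num
      · simp only [hu_def, ha, if_false]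
        exact div_nonpos_of_nonpos_of_nonneg (hr_nonpos j) ha_nonneg
    have hu_sum : ∀ _i : Fin n, ∑ j, u j = -1 := by
      intro i
      by_cases ha : a = 0
      · simp only [hu_def, ha, if_true]
        have hn : 0 < n := i.pos
        obtain ⟨m, rfl⟩ : ∃ m, n = m + 1 := ⟨n - 1, by omega⟩
        rw [Fin.sum_univ_succ]
        simp
      · have h : ∑ j, u j = (∑ j, r j) / a := by
          simp only [hu_def, ha, if_false]
          rw [Finset.sum_div]
        rw [h, hr_sum, neg_div, div_self ha]
    set S : Matrix (Fin n) (Fin n) ℝ := Matrix.of fun i j => B i j - c i * u j with hS_def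
    have hS_off : ∀ i j, i ≠ j → S i j ≤ 0 := by
      intro i j hij
      have hB : B i j ≤ 0 := hoff i.succ j.succ (fun h => hij (Fin.succ_injective _ h))
      have hcu : 0 ≤ c i * u j := by nlinarith [hc_nonpos i, hu_nonpos j]
      simp only [hS_def, Matrix.of_apply]
      linarith
    have hS_row : ∀ i, ∑ j, S i j = 0 := by
      intro i
      have h : ∑ j, S i j = (∑ j, B i j) - c i * ∑ j, u j := by
        simp only [hS_def, Matrix.of_apply]
        rw [Finset.sum_sub_distrib, Finset.mul_sum]
      rw [h, hB_sum i, hu_sum i]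
      ring
    obtain ⟨L', U', hL', hU'low, hU'diag, hS_eq⟩ := ih S hS_off hS_row
    refine ⟨Matrix.of fun i j => Fin.cases (Fin.cases a (fun _ => 0) j)
        (fun i' => Fin.cases (c i') (fun j' => L' i' j') j) i,
      Matrix.of fun i j => Fin.cases (Fin.cases 1 (fun j' => u j') j)
        (fun i' => Fin.cases 0 (fun j' => U' i' j') j) i, ?_, ?_, ?_, ?_⟩
    · intro i j hij
      induction i using Fin.cases with
      | zero =>
        induction j using Fin.cases with
        | zero => exact absurd hij (lt_irrefl 0)
        | succ j' => simp
      | succ i' =>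
        induction j using Fin.cases with
        | zero => exact absurd hij (by simp [Fin.not_lt, Fin.zero_le])
        | succ j' =>
          simp only [Matrix.of_apply, Fin.cases_succ]
          exact hL' i' j' (by simpa [Fin.succ_lt_succ_iff] using hij)
    · intro i j hij
      induction i using Fin.cases with
      | zero =>
        induction j using Fin.cases with
        | zero => exact absurd hij (lt_irrefl 0)
        | succ j' => exact absurd hij (by simp [Fin.not_lt, Fin.zero_le])
      | succ i' =>
        induction j using Fin.cases with
        | zero => simp
        | succ j' =>
          simp only [Matrix.of_apply, Fin.cases_succ]
          exact hU'low i' j' (by simpa [Fin.succ_lt_succ_iff] using hij)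
    · intro i
      induction i using Fin.cases with
      | zero => simp
      | succ i' =>
        simp only [Matrix.of_apply, Fin.cases_succ]
        exact hU'diag i'
    · ext i j
      rw [Matrix.mul_apply, Fin.sum_univ_succ]
      induction i using Fin.cases with
      | zero =>
        induction j using Fin.cases with
        | zero => simp [ha_def]
        | succ j' =>
          simp only [Matrix.of_apply, Fin.cases_zero, Fin.cases_succ]
          have : A 0 j'.succ = r j' := rfl
          rw [this, ← ha_mul_u j']
          simp
      | succ i' =>
        induction j using Fin.cases with
        | zero =>
          simp only [Matrix.of_apply, Fin.cases_zero, Fin.cases_succ]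
          have : A i'.succ 0 = c i' := rfl
          rw [this]
          simp
        | succ j' =>
          simp only [Matrix.of_apply, Fin.cases_succ]
          have hSij : S i' j' = ∑ k, L' i' k * U' k j' := by
            rw [hS_eq, Matrix.mul_apply]
          have hA : A i'.succ j'.succ = B i' j' := rfl
          have hBS : B i' j' = S i' j' + c i' * u j' := by
            simp only [hS_def, Matrix.of_apply]; ring
          rw [hA, hBS, hSij]
          simp only [Fin.cases_zero]
          ring

/-- A matrix with property S_r (nonnegative diagonal, nonpositive
off-diagonal, rows summing to zero) admits an LU factorization without
pivoting, and one may take U to have unit diagonal entries. -/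
theorem stmt_9 (n : ℕ) (A : Matrix (Fin n) (Fin n) ℝ)
    (hdiag : ∀ i, 0 ≤ A i i)
    (hoff : ∀ i j, i ≠ j → A i j ≤ 0)
    (hrow : ∀ i, ∑ j, A i j = 0) :
    ∃ L U : Matrix (Fin n) (Fin n) ℝ,
      (∀ i j, i < j → L i j = 0) ∧
      (∀ i j, j < i → U i j = 0) ∧ (∀ i, U i i = 1) ∧
      A = L * U := by
  exact lu_aux n A hoff hrow
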